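/- Let T be a theory over a one-sorted first-order signature. Then the following are equivalent: (1) T is stably finite and smooth; (2) T is smooth and has a strong pre-witness. -/

import Mathlib

open FirstOrder FirstOrder.Language

universe u v

/-- `M` (with structure `inst`) is a model of the theory `T`. -/
def ModelsT (L : FirstOrder.Language.{u, v}) (T : L.Theory) (M : Type) (inst : L.Structure M) : Prop :=
  letI := inst
  T.Model M

/-- Realization of a formula, with the structure instance given explicitly. -/
def RealizeIn (L : FirstOrder.Language.{u, v}) (M : Type) (inst : L.Structure M) {α : Type}
    (φ : L.Formula α) (v : α → M) : Prop :=
  letI := inst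
  φ.Realize v

/-- A valuation `v` satisfies the arrangement `δ_V^E` determined on the finite variable
set `V` by the equivalence relation `E`. -/
def RealizesArr {M : Type} (E : Setoid ℕ) (V : Finset ℕ) (v : ℕ → M) : Prop :=
  ∀ x ∈ V, ∀ y ∈ V, (E.r x y ↔ v x = v y)

/-- `T` is stably finite: every quantifier-free formula satisfied in a model of `T` is
satisfied in a finite model of `T` of no greater cardinality. -/
def StablyFiniteT (L : FirstOrder.Language.{u, v}) (T : L.Theory) : Prop :=
  ∀ φ : L.Formula ℕ, φ.IsQF →
    ∀ (M : Type) (inst : L.Structure M), ModelsT L T M inst →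
      ∀ v : ℕ → M, RealizeIn L M inst φ v →
        ∃ (N : Type) (instN : L.Structure N), ModelsT L T N instN ∧ Finite N ∧
          Cardinal.mk N ≤ Cardinal.mk M ∧ ∃ w : ℕ → N, RealizeIn L N instN φ w

/-- `T` is finitely smooth: for every quantifier-free formula `φ`, model of `T` with a
valuation satisfying `φ`, and finite cardinal `κ` at least the size of the model, there
is a model of `T` of size exactly `κ` with a valuation satisfying `φ`. -/
def FinitelySmoothT (L : FirstOrder.Language.{u, v}) (T : L.Theory) : Prop :=
  ∀ φ : L.Formula ℕ, φ.IsQF →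
    ∀ (M : Type) (inst : L.Structure M), ModelsT L T M inst →
      ∀ v : ℕ → M, RealizeIn L M inst φ v →
        ∀ κ : ℕ, Cardinal.mk M ≤ (κ : Cardinal) →
          ∃ (N : Type) (instN : L.Structure N), ModelsT L T N instN ∧
            Cardinal.mk N = (κ : Cardinal) ∧ ∃ w : ℕ → N, RealizeIn L N instN φ w

/-- `T` is smooth: for every quantifier-free formula `φ`, model of `T` with a valuation
satisfying `φ`, and cardinal `κ` at least the size of the model, there is a model of `T`
of size exactly `κ` with a valuation satisfying `φ`. -/
def SmoothT (L : FirstOrder.Language.{u, v}) (T : L.Theory) : Prop :=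
  ∀ φ : L.Formula ℕ, φ.IsQF →
    ∀ (M : Type) (inst : L.Structure M), ModelsT L T M inst →
      ∀ v : ℕ → M, RealizeIn L M inst φ v →
        ∀ κ : Cardinal, Cardinal.mk M ≤ κ →
          ∃ (N : Type) (instN : L.Structure N), ModelsT L T N instN ∧
            Cardinal.mk N = κ ∧ ∃ w : ℕ → N, RealizeIn L N instN φ w

/-- `T` is stably infinite: every quantifier-free formula satisfiable in some model of `T`
is satisfiable in some model of `T` with infinite domain. -/
def StablyInfiniteT (L : FirstOrder.Language.{u, v}) (T : L.Theory) : Prop :=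
  ∀ φ : L.Formula ℕ, φ.IsQF →
    (∃ (M : Type) (inst : L.Structure M), ModelsT L T M inst ∧
      ∃ v : ℕ → M, RealizeIn L M inst φ v) →
    ∃ (M : Type) (inst : L.Structure M), ModelsT L T M inst ∧ Infinite M ∧
      ∃ v : ℕ → M, RealizeIn L M inst φ v

/-- `wit` is a pre-witness for `T`: it maps quantifier-free formulas to quantifier-free
formulas; `φ` and `∃x⃗. wit(φ)` (where `x⃗ = vars(wit(φ)) \ vars(φ)`) hold in exactly the
same models-with-valuations of `T`; and if `wit(φ)` is satisfiable in a model of `T`,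
then `φ` is satisfied in some model of `T` under a valuation in which every element of
the domain is the value of some variable of `wit(φ)`. -/
def IsPreWitness (L : FirstOrder.Language.{u, v}) (T : L.Theory) (wit : L.Formula ℕ → L.Formula ℕ) :
    Prop :=
  (∀ φ : L.Formula ℕ, φ.IsQF → (wit φ).IsQF) ∧
  (∀ φ : L.Formula ℕ, φ.IsQF →
    ∀ (M : Type) (inst : L.Structure M), ModelsT L T M inst → ∀ v : ℕ → M,
      (RealizeIn L M inst φ v ↔
        ∃ w : ℕ → M, (∀ x : ℕ, x ∉ (wit φ).freeVarFinset \ φ.freeVarFinset → w x = v x) ∧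
          RealizeIn L M inst (wit φ) w)) ∧
  (∀ φ : L.Formula ℕ, φ.IsQF →
    (∃ (M : Type) (inst : L.Structure M), ModelsT L T M inst ∧
      ∃ v : ℕ → M, RealizeIn L M inst (wit φ) v) →
    ∃ (M : Type) (inst : L.Structure M), ModelsT L T M inst ∧
      ∃ v : ℕ → M, RealizeIn L M inst φ v ∧
        ∀ a : M, ∃ x ∈ (wit φ).freeVarFinset, v x = a)

/-- `wit` is a strong pre-witness for `T`: a pre-witness such that in addition, for every
quantifier-free `φ`, finite variable set `V`, and arrangement `δ_V` of `V`, if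
`wit(φ) ∧ δ_V` is satisfiable in a model of `T`, then it is satisfied in some model of `T`
under a valuation in which every element of the domain is the value of some variable of
`wit(φ) ∧ δ_V`. -/
def IsStrongPreWitness (L : FirstOrder.Language.{u, v}) (T : L.Theory)
    (wit : L.Formula ℕ → L.Formula ℕ) : Prop :=
  IsPreWitness L T wit ∧
  ∀ φ : L.Formula ℕ, φ.IsQF → ∀ (V : Finset ℕ) (E : Setoid ℕ),
    (∃ (M : Type) (inst : L.Structure M), ModelsT L T M inst ∧
      ∃ v : ℕ → M, RealizeIn L M inst (wit φ) v ∧ RealizesArr E V v) →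
    ∃ (M : Type) (inst : L.Structure M), ModelsT L T M inst ∧
      ∃ v : ℕ → M, RealizeIn L M inst (wit φ) v ∧ RealizesArr E V v ∧
        ∀ a : M, ∃ x ∈ (wit φ).freeVarFinset ∪ V, v x = a

/-!
For a stably finite theory, every arrangement of the free variables of a quantifier-free `φ`
that is consistent with `φ` and `T` holds in a model of least finite size; adjoin as many fresh
variables `Y` as the largest of these sizes. The witness is the disjunction of `φ ∧ δ_U^r` over
the arrangements `r` of `U = vars(φ) ∪ Y` for which `φ ∧ δ_U^r` has a model all of whose
elements are values of variables of `U`. Any model `M` of `φ` receives an injective image of the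
least model for the arrangement that `M` induces on `vars(φ)`, and this image provides the values
of `Y`. Smoothness enlarges a model named by `U` by exactly as many elements as an arrangement of
further variables `V` needs, which gives the strong property.

Conversely, apply the strong pre-witness to the arrangement that a model of `wit(φ)` induces on
the variables of `wit(φ)`: the resulting model is named by these variables, so it is finite and
no larger than the original one.
-/

open Cardinal Function

universe w

section KernelMatching

variable {ι : Type*}

theorem Function.Embedding.exists_extend_of_mk_le {α β : Type w} [Finite α] (h : #α ≤ #β)
    {s : Set α} (f : s ↪ β) : ∃ g : α ↪ β, ∀ x : s, g x = f x := by
  classical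
  have hcompl : #(sᶜ : Set α) ≤ #((Set.range f)ᶜ : Set β) := by
    rw [← add_le_add_iff_of_lt_aleph0 (Set.toFinite s).lt_aleph0]
    nth_rewrite 2 [← mk_range_eq f f.injective]
    rwa [add_comm, mk_sum_compl, add_comm, mk_sum_compl]
  obtain ⟨e⟩ := (le_def _ _).mp hcompl
  have hinj : Injective (Sum.elim f (Subtype.val ∘ e)) :=
    f.injective.sumElim (Subtype.val_injective.comp e.injective) fun a b hab => (e b).2 ⟨a, hab⟩
  exact ⟨(Equiv.Set.sumCompl s).symm.toEmbedding.trans ⟨_, hinj⟩, fun x => by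
    simp [Equiv.Set.sumCompl_symm_apply]⟩

theorem exists_equiv_image_of_ker {α β : Type*} {s : Set ι} {u : ι → α} {v : ι → β}
    (hker : ∀ i ∈ s, ∀ j ∈ s, u i = u j ↔ v i = v j) :
    ∃ e : u '' s ≃ v '' s, ∀ i (hi : i ∈ s), (e ⟨u i, Set.mem_image_of_mem u hi⟩ : β) = v i := by
  choose pre hpre_mem hpre using fun a : u '' s => a.2
  have hv : ∀ i (hi : i ∈ s), v (pre ⟨u i, Set.mem_image_of_mem u hi⟩) = v i := fun i hi =>
    (hker _ (hpre_mem _) i hi).mp (hpre _)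
  let f : u '' s → v '' s := fun a => ⟨v (pre a), Set.mem_image_of_mem v (hpre_mem a)⟩
  have hf : Bijective f := by
    refine ⟨fun a b hab => Subtype.ext ?_, ?_⟩
    · rw [← hpre a, ← hpre b]
      exact (hker _ (hpre_mem a) _ (hpre_mem b)).mpr (congrArg Subtype.val hab)
    · rintro ⟨_, i, hi, rfl⟩
      exact ⟨⟨u i, Set.mem_image_of_mem u hi⟩, Subtype.ext (hv i hi)⟩
  exact ⟨Equiv.ofBijective f hf, hv⟩

theorem mk_eq_mk_image_of_ker {α β : Type w} {s : Set ι} {u : ι → α} {v : ι → β}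
    (hcov : ∀ a, ∃ i ∈ s, u i = a) (hker : ∀ i ∈ s, ∀ j ∈ s, u i = u j ↔ v i = v j) :
    #α = #(v '' s) := by
  obtain ⟨e, -⟩ := exists_equiv_image_of_ker hker
  have himage : u '' s = Set.univ := Set.eq_univ_of_forall hcov
  rw [← mk_congr e, himage, mk_univ]

theorem exists_embedding_comp_eqOn {α β : Type w} [Finite α] {s : Set ι} {t : Set β}
    {u : ι → α} {v : ι → β} (hcard : #α ≤ #t) (hvt : Set.MapsTo v s t)
    (hker : ∀ i ∈ s, ∀ j ∈ s, u i = u j ↔ v i = v j) :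
    ∃ g : α ↪ t, ∀ i ∈ s, (g (u i) : β) = v i := by
  obtain ⟨e, he⟩ := exists_equiv_image_of_ker hker
  obtain ⟨g, hg⟩ := Function.Embedding.exists_extend_of_mk_le hcard
    (e.toEmbedding.trans (Set.embeddingOfSubset _ _ (Set.image_subset_iff.mpr hvt)))
  refine ⟨g, fun i hi => ?_⟩
  rw [← he i hi]
  exact congrArg Subtype.val (hg ⟨u i, Set.mem_image_of_mem u hi⟩)

theorem exists_eqOn_of_mk_eq_mk_image {α β : Type w} [Nonempty α] {U W : Set ι}
    {u : ι → α} {v : ι → β} (hUW : U ⊆ W) (hW : W.Finite) (hcard : #α = #(v '' W))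
    (hker : ∀ i ∈ U, ∀ j ∈ U, u i = u j ↔ v i = v j) :
    ∃ u' : ι → α, Set.EqOn u' u U ∧ (∀ i ∈ W, ∀ j ∈ W, u' i = u' j ↔ v i = v j) ∧
      ∀ a, ∃ i ∈ W, u' i = a := by
  have : Finite (v '' W) := (hW.image v).to_subtype
  have : Finite α := mk_lt_aleph0_iff.mp (hcard ▸ (hW.image v).lt_aleph0)
  obtain ⟨g, hg⟩ := exists_embedding_comp_eqOn hcard.le
    (fun i hi => Set.mem_image_of_mem v (hUW hi)) hker
  have hsurj : Surjective g :=
    (g.injective.bijective_of_nat_card_le (congrArg toNat hcard).ge).2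
  set G : α → β := fun a => g a
  have hG : Injective G := Subtype.val_injective.comp g.injective
  have hGu' : ∀ i ∈ W, G (invFun G (v i)) = v i := fun i hi =>
    invFun_eq <| (hsurj ⟨v i, Set.mem_image_of_mem v hi⟩).imp fun _ h => congrArg Subtype.val h
  refine ⟨fun i => invFun G (v i), fun i hi => hG ((hGu' i (hUW hi)).trans (hg i hi).symm),
    fun i hi j hj => ?_, fun a => ?_⟩
  · rw [← hG.eq_iff, hGu' i hi, hGu' j hj]
  · obtain ⟨i, hi, hia⟩ := (g a).2
    exact ⟨i, hi, hG ((hGu' i hi).trans hia)⟩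

theorem exists_update_covering {α : Type w} {ι : Type w} [Nonempty α] {Y : Set ι}
    (hY : #α ≤ #Y) (u : ι → α) :
    ∃ u' : ι → α, (∀ i ∉ Y, u' i = u i) ∧ ∀ a, ∃ i ∈ Y, u' i = a := by
  classical
  obtain ⟨e⟩ := (le_def _ _).mp hY
  refine ⟨fun i => if hi : i ∈ Y then invFun e ⟨i, hi⟩ else u i, fun i hi => dif_neg hi,
    fun a => ⟨e a, (e a).2, ?_⟩⟩
  simp [leftInverse_invFun e.injective a]

end KernelMatching

namespace FirstOrder.Language

variable {L : Language.{u, v}} {α β : Type*} {n : ℕ}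

namespace BoundedFormula

variable [DecidableEq α]

theorem freeVarFinset_sup (φ ψ : L.BoundedFormula α n) :
    (φ ⊔ ψ).freeVarFinset = φ.freeVarFinset ∪ ψ.freeVarFinset := by
  simp [max, BoundedFormula.not]

theorem freeVarFinset_inf (φ ψ : L.BoundedFormula α n) :
    (φ ⊓ ψ).freeVarFinset = φ.freeVarFinset ∪ ψ.freeVarFinset := by
  simp [min, BoundedFormula.not]

theorem freeVarFinset_subset_foldr
    {op : L.BoundedFormula α n → L.BoundedFormula α n → L.BoundedFormula α n}
    (hop : ∀ φ ψ, (op φ ψ).freeVarFinset = φ.freeVarFinset ∪ ψ.freeVarFinset)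
    (init : L.BoundedFormula α n) {l : List (L.BoundedFormula α n)} {φ : L.BoundedFormula α n}
    (hφ : φ ∈ l) : φ.freeVarFinset ⊆ (l.foldr op init).freeVarFinset := by
  induction l with
  | nil => simp at hφ
  | cons ψ l ih =>
    rw [List.foldr_cons, hop]
    rcases List.mem_cons.mp hφ with rfl | hφ
    · exact Finset.subset_union_left
    · exact (ih hφ).trans Finset.subset_union_right

theorem freeVarFinset_subset_iSup [Finite β] (f : β → L.BoundedFormula α n) (b : β) :
    (f b).freeVarFinset ⊆ (iSup f).freeVarFinset :=
  let _ := Fintype.ofFinite β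
  freeVarFinset_subset_foldr freeVarFinset_sup ⊥
    (List.mem_map_of_mem (Finset.mem_toList.mpr (Finset.mem_univ b)))

theorem freeVarFinset_subset_iInf [Finite β] (f : β → L.BoundedFormula α n) (b : β) :
    (f b).freeVarFinset ⊆ (iInf f).freeVarFinset :=
  let _ := Fintype.ofFinite β
  freeVarFinset_subset_foldr freeVarFinset_inf ⊤
    (List.mem_map_of_mem (Finset.mem_toList.mpr (Finset.mem_univ b)))

end BoundedFormula

namespace BoundedFormula.IsQF

theorem foldr {op : L.BoundedFormula α n → L.BoundedFormula α n → L.BoundedFormula α n}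
    (hop : ∀ {φ ψ}, φ.IsQF → ψ.IsQF → (op φ ψ).IsQF) {init : L.BoundedFormula α n}
    (hinit : init.IsQF) {l : List (L.BoundedFormula α n)} (hl : ∀ φ ∈ l, φ.IsQF) :
    (l.foldr op init).IsQF := by
  induction l with
  | nil => exact hinit
  | cons ψ l ih =>
    exact hop (hl ψ List.mem_cons_self) (ih fun φ hφ => hl φ (List.mem_cons_of_mem ψ hφ))

theorem iSup [Finite β] {f : β → L.BoundedFormula α n} (hf : ∀ b, (f b).IsQF) :
    (BoundedFormula.iSup f).IsQF :=
  foldr sup isQF_bot (by simp [hf])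

theorem iInf [Finite β] {f : β → L.BoundedFormula α n} (hf : ∀ b, (f b).IsQF) :
    (BoundedFormula.iInf f).IsQF :=
  foldr inf top (by simp [hf])

end BoundedFormula.IsQF

namespace Formula

theorem realize_congr [DecidableEq α] {M : Type*} [L.Structure M] (φ : L.Formula α)
    {v w : α → M} (h : ∀ a ∈ φ.freeVarFinset, v a = w a) : φ.Realize v ↔ φ.Realize w := by
  have hvw : v ∘ ((↑) : ↥(φ.freeVarFinset : Set α) → α) = w ∘ (↑) := funext fun a => h a a.2
  simp only [Formula.Realize]
  rw [← BoundedFormula.realize_restrictFreeVar' subset_rfl, hvw,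
    BoundedFormula.realize_restrictFreeVar']

open Classical in
/-- The arrangement `δ_U^r`; unsatisfiable unless `r` is an equivalence relation. -/
noncomputable def arrangement (U : Finset ℕ) (r : U → U → Prop) : L.Formula ℕ :=
  Formula.iInf fun p : U × U =>
    if r p.1 p.2 then (Term.var p.1.1).equal (Term.var p.2.1)
    else ((Term.var p.1.1).equal (Term.var p.2.1)).not

variable {U : Finset ℕ} {r : U → U → Prop}

theorem realize_arrangement {M : Type*} [L.Structure M] {v : ℕ → M} :
    (arrangement (L := L) U r).Realize v ↔ ∀ x y : U, r x y ↔ v x = v y := by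
  simp only [arrangement, Formula.realize_iInf, Prod.forall]
  refine forall₂_congr fun x y => ?_
  split_ifs with h <;> simp [h]

theorem isQF_arrangement : (arrangement (L := L) U r).IsQF :=
  BoundedFormula.IsQF.iInf fun _ => by
    split_ifs
    exacts [(BoundedFormula.IsAtomic.equal _ _).isQF, (BoundedFormula.IsAtomic.equal _ _).isQF.not]

theorem subset_freeVarFinset_arrangement : U ⊆ (arrangement (L := L) U r).freeVarFinset :=
  fun x hx => BoundedFormula.freeVarFinset_subset_iInf _ (⟨x, hx⟩, ⟨x, hx⟩) <| by
    split_ifs <;> simp [Term.equal, Term.bdEqual, Term.relabel]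

end Formula

namespace Theory

variable (T : L.Theory)

def HasCoveredModel (φ : L.Formula ℕ) (U : Finset ℕ) (r : U → U → Prop) : Prop :=
  ∃ (N : Type) (_ : L.Structure N), N ⊨ T ∧ ∃ u : ℕ → N,
    φ.Realize u ∧ (∀ x y : U, r x y ↔ u x = u y) ∧ ∀ a : N, ∃ x ∈ U, u x = a

def HasModelOfCard (ψ : L.Formula ℕ) (k : ℕ) : Prop :=
  ∃ (N : Type) (_ : L.Structure N), N ⊨ T ∧ Finite N ∧ Nat.card N = k ∧
    ∃ u : ℕ → N, ψ.Realize u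

noncomputable def minModelCard (ψ : L.Formula ℕ) : ℕ :=
  sInf {k | T.HasModelOfCard ψ k}

noncomputable def freshBound (φ : L.Formula ℕ) : ℕ :=
  ⨆ r : φ.freeVarFinset → φ.freeVarFinset → Prop,
    T.minModelCard (φ ⊓ Formula.arrangement φ.freeVarFinset r)

noncomputable def freshVars (φ : L.Formula ℕ) : Finset ℕ :=
  Finset.Ico (φ.freeVarFinset.sup id + 1) (φ.freeVarFinset.sup id + 1 + T.freshBound φ)

noncomputable def witnessVars (φ : L.Formula ℕ) : Finset ℕ :=
  φ.freeVarFinset ∪ T.freshVars φ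

noncomputable def witness (φ : L.Formula ℕ) : L.Formula ℕ :=
  Formula.iSup fun r : {r : T.witnessVars φ → T.witnessVars φ → Prop //
      T.HasCoveredModel φ (T.witnessVars φ) r} =>
    φ ⊓ Formula.arrangement (T.witnessVars φ) r.1

variable {T} {φ : L.Formula ℕ}

theorem notMem_freshVars {x : ℕ} (hx : x ∈ φ.freeVarFinset) : x ∉ T.freshVars φ := by
  have : x ≤ φ.freeVarFinset.sup id := Finset.le_sup (f := id) hx
  simp only [freshVars, Finset.mem_Ico]
  omega

theorem minModelCard_le_freshBound (r : φ.freeVarFinset → φ.freeVarFinset → Prop) :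
    T.minModelCard (φ ⊓ Formula.arrangement φ.freeVarFinset r) ≤ T.freshBound φ :=
  le_ciSup (f := fun r => T.minModelCard (φ ⊓ Formula.arrangement φ.freeVarFinset r))
    (Finite.bddAbove_range _) r

theorem isQF_witness (hφ : φ.IsQF) : (T.witness φ).IsQF :=
  BoundedFormula.IsQF.iSup fun _ => hφ.inf Formula.isQF_arrangement

theorem realize_witness {M : Type*} [L.Structure M] {v : ℕ → M} :
    (T.witness φ).Realize v ↔ ∃ r, T.HasCoveredModel φ (T.witnessVars φ) r ∧
      φ.Realize v ∧ ∀ x y : T.witnessVars φ, r x y ↔ v x = v y := by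
  simp only [witness, Formula.realize_iSup, Formula.realize_inf, Formula.realize_arrangement,
    Subtype.exists, exists_prop]

theorem witnessVars_subset_freeVarFinset_witness {r : T.witnessVars φ → T.witnessVars φ → Prop}
    (hr : T.HasCoveredModel φ (T.witnessVars φ) r) :
    T.witnessVars φ ⊆ (T.witness φ).freeVarFinset := by
  intro x hx
  apply BoundedFormula.freeVarFinset_subset_iSup (fun r : {r // T.HasCoveredModel φ _ r} =>
    φ ⊓ Formula.arrangement (T.witnessVars φ) r.1) ⟨r, hr⟩
  rw [BoundedFormula.freeVarFinset_inf]
  exact Finset.mem_union_right _ (Formula.subset_freeVarFinset_arrangement hx)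

theorem exists_model_covered_by_freshVars (hSF : StablyFiniteT L T) (hφ : φ.IsQF)
    {M : Type} [L.Structure M] (hM : M ⊨ T) {v : ℕ → M} (hv : φ.Realize v) :
    ∃ (N : Type) (_ : L.Structure N), N ⊨ T ∧ Finite N ∧ #N ≤ #M ∧ ∃ u : ℕ → N,
      φ.Realize u ∧ (∀ x ∈ φ.freeVarFinset, ∀ y ∈ φ.freeVarFinset, u x = u y ↔ v x = v y) ∧
      ∀ a : N, ∃ y ∈ T.freshVars φ, u y = a := by
  set F := φ.freeVarFinset
  set ψ := φ ⊓ Formula.arrangement F fun x y => v x = v y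
  have hψv : ψ.Realize v := Formula.realize_inf.mpr ⟨hv, Formula.realize_arrangement.mpr
    fun _ _ => Iff.rfl⟩
  obtain ⟨N₁, _, hN₁, hfin₁, hle₁, v₁, hv₁⟩ :=
    hSF ψ (hφ.inf Formula.isQF_arrangement) M _ hM v hψv
  have hex : T.HasModelOfCard ψ (Nat.card N₁) := ⟨N₁, _, hN₁, hfin₁, rfl, v₁, hv₁⟩
  have hmin : T.HasModelOfCard ψ (T.minModelCard ψ) :=
    Nat.sInf_mem (s := {k | T.HasModelOfCard ψ k}) ⟨_, hex⟩
  have hmin_le : T.minModelCard ψ ≤ Nat.card N₁ := Nat.sInf_le hex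
  obtain ⟨N, _, hN, hfin, hcard, u₁, hu₁⟩ := hmin
  have hNM : #N ≤ #M := calc
    #N = Nat.card N := Nat.cast_card.symm
    _ ≤ Nat.card N₁ := by exact_mod_cast hcard ▸ hmin_le
    _ = #N₁ := Nat.cast_card
    _ ≤ #M := hle₁
  have hNY : #N ≤ #(T.freshVars φ : Set ℕ) := by
    rw [Finset.coe_sort_coe, mk_coe_finset, freshVars, Nat.card_Ico, Nat.add_sub_cancel_left,
      ← Nat.cast_card, hcard]
    exact_mod_cast minModelCard_le_freshBound _
  have : Nonempty N := ⟨u₁ 0⟩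
  obtain ⟨u, hu₁u, hcov⟩ := exists_update_covering hNY u₁
  have hagree : ∀ x ∈ F, u x = u₁ x := fun x hx => hu₁u x (notMem_freshVars hx)
  obtain ⟨hφu₁, harr⟩ := Formula.realize_inf.mp hu₁
  refine ⟨N, _, hN, hfin, hNM, u, (Formula.realize_congr φ hagree).mpr hφu₁,
    fun x hx y hy => ?_, hcov⟩
  rw [hagree x hx, hagree y hy]
  exact (Formula.realize_arrangement.mp harr ⟨x, hx⟩ ⟨y, hy⟩).symm

theorem exists_realize_witness_of_realize (hSF : StablyFiniteT L T) (hφ : φ.IsQF)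
    {M : Type} [L.Structure M] (hM : M ⊨ T) {v : ℕ → M} (hv : φ.Realize v) :
    ∃ w : ℕ → M, (∀ x, x ∉ (T.witness φ).freeVarFinset \ φ.freeVarFinset → w x = v x) ∧
      (T.witness φ).Realize w := by
  obtain ⟨N, _, hN, _, hNM, u, hu, hker, hcov⟩ :=
    exists_model_covered_by_freshVars hSF hφ hM hv
  obtain ⟨g, hg⟩ := exists_embedding_comp_eqOn (t := Set.univ) (by rwa [mk_univ])
    (Set.mapsTo_univ _ _) hker
  set G : N → M := fun a => g a
  have hG : Injective G := Subtype.val_injective.comp g.injective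
  set w : ℕ → M := fun x => if x ∈ T.freshVars φ then G (u x) else v x
  have hw : ∀ x ∈ T.witnessVars φ, w x = G (u x) := by
    intro x hx
    by_cases hY : x ∈ T.freshVars φ
    · simp [w, hY]
    · simp only [w, hY, if_false]
      exact (hg x ((Finset.mem_union.mp hx).resolve_right hY)).symm
  have hr : T.HasCoveredModel φ (T.witnessVars φ) fun x y => u x = u y :=
    ⟨N, _, hN, u, hu, fun _ _ => Iff.rfl,
      fun a => (hcov a).imp fun y hy => ⟨Finset.mem_union_right _ hy.1, hy.2⟩⟩
  refine ⟨w, fun x hx => ?_, realize_witness.mpr ⟨_, hr, ?_, fun x y => ?_⟩⟩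
  · by_cases hY : x ∈ T.freshVars φ
    · refine absurd (Finset.mem_sdiff.mpr ⟨?_, fun hF => notMem_freshVars hF hY⟩) hx
      exact witnessVars_subset_freeVarFinset_witness hr (Finset.mem_union_right _ hY)
    · simp [w, hY]
  · exact (Formula.realize_congr φ fun x hx =>
      ((hw x (Finset.mem_union_left _ hx)).trans (hg x hx)).symm).mp hv
  · rw [hw x x.2, hw y y.2, hG.eq_iff]

theorem realize_of_realize_witness {M : Type*} [L.Structure M] {v w : ℕ → M}
    (hwv : ∀ x, x ∉ (T.witness φ).freeVarFinset \ φ.freeVarFinset → w x = v x)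
    (hw : (T.witness φ).Realize w) : φ.Realize v := by
  obtain ⟨-, -, hφw, -⟩ := realize_witness.mp hw
  exact (Formula.realize_congr φ fun x hx =>
    hwv x fun h => (Finset.mem_sdiff.mp h).2 hx).mp hφw

theorem exists_covered_model_of_realize_witness {M : Type*} [L.Structure M] {v : ℕ → M}
    (hv : (T.witness φ).Realize v) :
    ∃ (N : Type) (_ : L.Structure N), N ⊨ T ∧ ∃ u : ℕ → N, φ.Realize u ∧
      ∀ a : N, ∃ x ∈ (T.witness φ).freeVarFinset, u x = a := by
  obtain ⟨r, hr, -⟩ := realize_witness.mp hv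
  obtain ⟨N, _, hN, u, hu, -, hcov⟩ := id hr
  exact ⟨N, _, hN, u, hu, fun a =>
    (hcov a).imp fun x hx => ⟨witnessVars_subset_freeVarFinset_witness hr hx.1, hx.2⟩⟩

theorem exists_covered_realize_witness (hSm : SmoothT L T) (hφ : φ.IsQF) (V : Finset ℕ)
    {M : Type} [L.Structure M] {v : ℕ → M} (hv : (T.witness φ).Realize v) :
    ∃ (N : Type) (_ : L.Structure N), N ⊨ T ∧ ∃ u : ℕ → N, (T.witness φ).Realize u ∧
      (∀ x ∈ V, ∀ y ∈ V, u x = u y ↔ v x = v y) ∧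
      ∀ a : N, ∃ x ∈ (T.witness φ).freeVarFinset ∪ V, u x = a := by
  set U := T.witnessVars φ
  obtain ⟨r, hr, -, hrv⟩ := realize_witness.mp hv
  obtain ⟨N₀, _, hN₀, u₀, hφu₀, hru₀, hcov₀⟩ := id hr
  have hker₀ : ∀ x ∈ (U : Set ℕ), ∀ y ∈ (U : Set ℕ), u₀ x = u₀ y ↔ v x = v y :=
    fun x hx y hy => (hru₀ ⟨x, hx⟩ ⟨y, hy⟩).symm.trans (hrv _ _)
  have hN₀card : #N₀ ≤ #(v '' ↑(U ∪ V)) :=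
    (mk_eq_mk_image_of_ker hcov₀ hker₀).trans_le <|
      mk_le_mk_of_subset (Set.image_mono (Finset.coe_subset.mpr Finset.subset_union_left))
  obtain ⟨N, _, hN, hcard, u₁, hu₁⟩ := hSm _ (hφ.inf Formula.isQF_arrangement) N₀ _ hN₀ u₀
    (Formula.realize_inf.mpr ⟨hφu₀, Formula.realize_arrangement.mpr hru₀⟩) _ hN₀card
  obtain ⟨hφu₁, hru₁⟩ := Formula.realize_inf.mp hu₁
  have : Nonempty N := ⟨u₁ 0⟩
  obtain ⟨u, hu₁u, hker, hcov⟩ := exists_eqOn_of_mk_eq_mk_image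
    (Finset.coe_subset.mpr Finset.subset_union_left) (U ∪ V).finite_toSet hcard
    fun x hx y hy => (Formula.realize_arrangement.mp hru₁ ⟨x, hx⟩ ⟨y, hy⟩).symm.trans (hrv _ _)
  refine ⟨N, _, hN, u, realize_witness.mpr ⟨r, hr, ?_, fun x y => ?_⟩,
    fun x hx y hy => hker x (by simp [hx]) y (by simp [hy]), fun a => ?_⟩
  · exact (Formula.realize_congr φ fun x hx =>
      hu₁u (Finset.mem_union_left _ hx)).mpr hφu₁
  · rw [hrv, hker x (by simp) y (by simp)]
  · obtain ⟨x, hx, hxa⟩ := hcov a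
    exact ⟨x, Finset.union_subset_union (witnessVars_subset_freeVarFinset_witness hr)
      subset_rfl hx, hxa⟩

theorem isStrongPreWitness_witness (hSF : StablyFiniteT L T) (hSm : SmoothT L T) :
    IsStrongPreWitness L T T.witness := by
  refine ⟨⟨fun _ => isQF_witness, fun φ hφ M _ hM v =>
    ⟨exists_realize_witness_of_realize hSF hφ hM,
      fun ⟨_, hwv, hw⟩ => realize_of_realize_witness hwv hw⟩,
    fun φ _ ⟨M, _, _, v, hv⟩ => exists_covered_model_of_realize_witness hv⟩, ?_⟩
  rintro φ hφ V E ⟨M, _, -, v, hv, hvE⟩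
  obtain ⟨N, _, hN, u, hu, hker, hcov⟩ := exists_covered_realize_witness hSm hφ V hv
  exact ⟨N, _, hN, u, hu, fun x hx y hy => (hvE x hx y hy).trans (hker x hx y hy).symm, hcov⟩

end Theory

end FirstOrder.Language

theorem stablyFiniteT_of_isStrongPreWitness {L : FirstOrder.Language.{u, v}} {T : L.Theory}
    {wit : L.Formula ℕ → L.Formula ℕ} (hwit : IsStrongPreWitness L T wit) : StablyFiniteT L T := by
  obtain ⟨⟨-, hequiv, -⟩, hstrong⟩ := hwit
  intro φ hφ M _ hM v hv
  obtain ⟨w, -, hw⟩ := (hequiv φ hφ M _ hM v).mp hv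
  set V := (wit φ).freeVarFinset
  obtain ⟨N, _, hN, u, hu, huw, hcov⟩ :=
    hstrong φ hφ V (Setoid.ker w) ⟨M, _, hM, w, hw, fun _ _ _ _ => Iff.rfl⟩
  have hcovV : ∀ a : N, ∃ x ∈ (V : Set ℕ), u x = a := fun a => by
    simpa [V] using hcov a
  have hcard : #N = #(w '' V) :=
    mk_eq_mk_image_of_ker hcovV fun x hx y hy => (huw x hx y hy).symm
  refine ⟨N, _, hN, mk_lt_aleph0_iff.mp (hcard ▸ (V.finite_toSet.image w).lt_aleph0),
    hcard ▸ mk_set_le _, u, (hequiv φ hφ N _ hN u).mpr ⟨u, fun _ _ => rfl, hu⟩⟩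

/-- A theory is stably finite and smooth if and only if it is smooth and has a strong
pre-witness. -/
theorem stmt_16 (L : FirstOrder.Language.{u, v}) (T : L.Theory) :
    (StablyFiniteT L T ∧ SmoothT L T) ↔
      (SmoothT L T ∧ ∃ wit : L.Formula ℕ → L.Formula ℕ, IsStrongPreWitness L T wit) :=
  ⟨fun ⟨hSF, hSm⟩ => ⟨hSm, T.witness, T.isStrongPreWitness_witness hSF hSm⟩,
    fun ⟨hSm, _, hwit⟩ => ⟨stablyFiniteT_of_isStrongPreWitness hwit, hSm⟩⟩
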